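/- Let 0 < μ ≤ T, let (α^{(n)})_{n∈ℕ} be a sequence of (T,μ)-signals and let (ν_n)_{n∈ℕ} be an increasing sequence of positive real numbers with ν_n → +∞. Define α_n(t) = α^{(n)}(ν_n t) for t ≥ 0. If α⋆ ∈ L^∞([0,∞),[0,1]) is a weak-star limit point of the sequence (α_n), then α⋆(t) ∈ [μ/T, 1] for almost every t ≥ 0. -/

import Mathlib

/-!
Splitting `[t, t + L]` into `⌊L / T⌋` windows of length `T` shows that every `(T,μ)`-signal has
integral at least `μ L / T - μ` over any interval of length `L` in `[0, ∞)`. After the change of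
variables `s ↦ ν s`, the rescaled signal `α⁽ⁿ⁾(ν ·)` therefore has integral at least
`(μ / T)(b - a) - μ / ν` over `[a, b] ⊆ [0, ∞)`. Testing the weak-star convergence against the
indicator of `[a, b]` and letting `ν → ∞` gives `∫ₐᵇ α⋆ ≥ (μ / T)(b - a)`, and the Lebesgue
differentiation theorem turns this bound on interval averages into `α⋆ ≥ μ / T` almost everywhere.
-/

open MeasureTheory Filter Matrix

noncomputable section

/-- A `(T,μ)`-signal: a measurable function with values in `[0,1]` whose integral over any
window `[t, t+T]` with `t ≥ 0` is at least `μ`. -/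
def IsPESignal (T μ : ℝ) (α : ℝ → ℝ) : Prop :=
  Measurable α ∧ (∀ t, α t ∈ Set.Icc (0:ℝ) 1) ∧
    ∀ t : ℝ, 0 ≤ t → μ ≤ ∫ s in t..(t + T), α s

open Set Topology

namespace IsPESignal

variable {T μ : ℝ} {β : ℝ → ℝ}

lemma intervalIntegrable (hβ : IsPESignal T μ β) (a b : ℝ) :
    IntervalIntegrable β volume a b := by
  refine (intervalIntegrable_const (c := (1 : ℝ))).mono_fun hβ.1.aestronglyMeasurable
    (ae_of_all _ fun t => ?_)
  obtain ⟨h0, h1⟩ := hβ.2.1 t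
  simpa [abs_of_nonneg h0] using h1

lemma intervalIntegral_nonneg (hβ : IsPESignal T μ β) {a b : ℝ} (hab : a ≤ b) :
    0 ≤ ∫ s in a..b, β s :=
  intervalIntegral.integral_nonneg hab fun t _ => (hβ.2.1 t).1

lemma nat_mul_le_intervalIntegral (hβ : IsPESignal T μ β) (hT : 0 ≤ T) (n : ℕ) {t : ℝ}
    (ht : 0 ≤ t) : n * μ ≤ ∫ s in t..(t + n * T), β s := by
  induction n generalizing t with
  | zero => simp
  | succ n ih =>
    rw [← intervalIntegral.integral_add_adjacent_intervals (hβ.intervalIntegrable t (t + T))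
      (hβ.intervalIntegrable _ _)]
    have h := ih (t := t + T) (by linarith)
    push_cast
    rw [show t + (n + 1) * T = t + T + n * T by ring]
    linarith [hβ.2.2 t ht]

lemma le_intervalIntegral (hβ : IsPESignal T μ β) (hμ : 0 ≤ μ) (hT : 0 < T) {t L : ℝ}
    (ht : 0 ≤ t) (hL : 0 ≤ L) : μ / T * L - μ ≤ ∫ s in t..(t + L), β s := by
  set n := ⌊L / T⌋₊
  have hnT : n * T ≤ L := (le_div_iff₀ hT).1 (Nat.floor_le (div_nonneg hL hT.le))
  have hLn : μ / T * L ≤ μ * (n + 1) := by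
    rw [div_mul_eq_mul_div, mul_div_assoc]
    exact mul_le_mul_of_nonneg_left (Nat.lt_floor_add_one _).le hμ
  rw [← intervalIntegral.integral_add_adjacent_intervals
    (hβ.intervalIntegrable t (t + n * T)) (hβ.intervalIntegrable _ (t + L))]
  linarith [hβ.nat_mul_le_intervalIntegral hT.le n ht,
    hβ.intervalIntegral_nonneg (a := t + n * T) (b := t + L) (by linarith)]

lemma le_intervalIntegral_comp_mul (hβ : IsPESignal T μ β) (hμ : 0 ≤ μ) (hT : 0 < T)
    {c a b : ℝ} (hc : 0 < c) (ha : 0 ≤ a) (hab : a ≤ b) :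
    μ / T * (b - a) - μ / c ≤ ∫ s in a..b, β (c * s) := by
  have h := hβ.le_intervalIntegral hμ hT (t := c * a) (L := c * (b - a)) (by positivity)
    (mul_nonneg hc.le (sub_nonneg.2 hab))
  rw [intervalIntegral.integral_comp_mul_left _ hc.ne', smul_eq_mul,
    show c * b = c * a + c * (b - a) by ring]
  calc μ / T * (b - a) - μ / c = c⁻¹ * (μ / T * (c * (b - a)) - μ) := by field_simp
    _ ≤ _ := mul_le_mul_of_nonneg_left h (inv_nonneg.2 hc.le)

lemma le_intervalIntegral_of_tendsto {β : ℕ → ℝ → ℝ} (hβ : ∀ k, IsPESignal T μ (β k))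
    (hμ : 0 ≤ μ) (hT : 0 < T) {c : ℕ → ℝ} (hc : ∀ k, 0 < c k) (hc_top : Tendsto c atTop atTop)
    {f : ℝ → ℝ} {a b : ℝ} (ha : 0 ≤ a) (hab : a ≤ b)
    (hlim : Tendsto (fun k => ∫ s in a..b, β k (c k * s)) atTop (𝓝 (∫ s in a..b, f s))) :
    μ / T * (b - a) ≤ ∫ s in a..b, f s := by
  have hbound : Tendsto (fun k => μ / T * (b - a) - μ / c k) atTop (𝓝 (μ / T * (b - a))) := by
    simpa using tendsto_const_nhds.sub (hc_top.const_div_atTop μ)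
  exact le_of_tendsto_of_tendsto hbound hlim (Eventually.of_forall fun k =>
    (hβ k).le_intervalIntegral_comp_mul hμ hT (hc k) ha hab)

end IsPESignal

lemma setIntegral_Ici_mul_indicator_Icc (F : ℝ → ℝ) {a b : ℝ} (ha : 0 ≤ a) (hab : a ≤ b) :
    ∫ s in Ici 0, F s * (Icc a b).indicator 1 s = ∫ s in a..b, F s := by
  have hmul : (fun s => F s * (Icc a b).indicator 1 s) = (Icc a b).indicator F := by
    ext s
    by_cases hs : s ∈ Icc a b <;> simp [hs]
  rw [hmul, integral_indicator measurableSet_Icc, Measure.restrict_restrict measurableSet_Icc,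
    inter_eq_left.2 (Icc_subset_Ici_self.trans (Ici_subset_Ici.2 ha)),
    integral_Icc_eq_integral_Ioc, intervalIntegral.integral_of_le hab]

lemma integrableOn_indicator_Icc_one (s : Set ℝ) (a b : ℝ) :
    IntegrableOn ((Icc a b).indicator (1 : ℝ → ℝ)) s :=
  ((integrable_indicator_iff measurableSet_Icc).2
    (integrableOn_const measure_Icc_lt_top.ne)).integrableOn

lemma mul_le_average_closedBall {f : ℝ → ℝ} {c x r : ℝ} (hr : 0 < r)
    (h : c * (2 * r) ≤ ∫ s in (x - r)..(x + r), f s) :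
    c ≤ ⨍ y in Metric.closedBall x r, f y := by
  rw [setAverage_eq, Real.closedBall_eq_Icc, integral_Icc_eq_integral_Ioc,
    ← intervalIntegral.integral_of_le (by linarith), measureReal_def, Real.volume_Icc,
    ENNReal.toReal_ofReal (by linarith), smul_eq_mul, show x + r - (x - r) = 2 * r by ring]
  rw [inv_mul_eq_div, le_div_iff₀ (by positivity)]
  exact h

lemma ae_le_of_mul_sub_le_intervalIntegral {f : ℝ → ℝ} (hf : LocallyIntegrable f) {c : ℝ}
    (h : ∀ a b, 0 ≤ a → a ≤ b → c * (b - a) ≤ ∫ s in a..b, f s) :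
    ∀ᵐ x ∂volume.restrict (Ici 0), c ≤ f x := by
  rw [← Measure.restrict_congr_set Ioi_ae_eq_Ici, ae_restrict_iff' measurableSet_Ioi]
  filter_upwards [IsUnifLocDoublingMeasure.ae_tendsto_average (μ := volume) hf 1]
    with x hx (hx0 : 0 < x)
  have hlim : Tendsto (fun r => ⨍ y in Metric.closedBall x r, f y) (𝓝[>] 0) (𝓝 (f x)) :=
    hx (fun _ => x) id tendsto_id (eventually_mem_nhdsWithin.mono fun r (hr : 0 < r) =>
      Metric.mem_closedBall_self (by simpa using hr.le))
  refine ge_of_tendsto hlim ?_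
  filter_upwards [Ioo_mem_nhdsGT hx0] with r ⟨hr0, hrx⟩
  refine mul_le_average_closedBall hr0 ?_
  simpa [show x + r - (x - r) = 2 * r by ring] using h (x - r) (x + r) (by linarith) (by linarith)

theorem weakStar_limit_of_rescaled_pe_signals_general (T μ : ℝ) (hμ : 0 < μ) (hμT : μ ≤ T)
    (α : ℕ → ℝ → ℝ) (hα : ∀ n, IsPESignal T μ (α n))
    (ν : ℕ → ℝ) (hν0 : ∀ n, 0 < ν n)
    (hνtop : Tendsto ν atTop atTop)
    (αstar : ℝ → ℝ) (hmeas : Measurable αstar)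
    (hbd : ∀ t : ℝ, 0 ≤ t → αstar t ∈ Set.Icc (0:ℝ) 1)
    (φ : ℕ → ℕ) (hφ : StrictMono φ)
    (hlim : ∀ g : ℝ → ℝ, IntegrableOn g (Set.Ici (0:ℝ)) →
      Tendsto (fun k => ∫ s in Set.Ici (0:ℝ), α (φ k) (ν (φ k) * s) * g s) atTop
        (nhds (∫ s in Set.Ici (0:ℝ), αstar s * g s))) :
    ∀ᵐ t ∂(volume.restrict (Set.Ici (0:ℝ))), αstar t ∈ Set.Icc (μ / T) 1 := by
  have hT : 0 < T := hμ.trans_le hμT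
  -- `αstar` is only controlled on `[0, ∞)`, so extend it by zero.
  set f := (Ici (0 : ℝ)).indicator αstar
  have hf : LocallyIntegrable f := by
    refine (locallyIntegrable_const (1 : ℝ)).mono
      (hmeas.indicator measurableSet_Ici).aestronglyMeasurable
      (ae_of_all _ fun t => ?_)
    by_cases ht : t ∈ Ici (0 : ℝ)
    · obtain ⟨h0, h1⟩ := hbd t ht
      simpa [f, ht, abs_of_nonneg h0] using h1
    · simp [f, ht]
  have hinterval (a b : ℝ) (ha : 0 ≤ a) (hab : a ≤ b) : μ / T * (b - a) ≤ ∫ s in a..b, f s := by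
    rw [intervalIntegral.integral_congr fun s hs => indicator_of_mem
      (show s ∈ Ici 0 from ha.trans (uIcc_of_le hab ▸ hs).1) αstar]
    refine IsPESignal.le_intervalIntegral_of_tendsto (fun k => hα (φ k)) hμ.le hT (fun k => hν0 _)
      (hνtop.comp hφ.tendsto_atTop) ha hab ?_
    simpa only [setIntegral_Ici_mul_indicator_Icc _ ha hab] using
      hlim _ (integrableOn_indicator_Icc_one _ a b)
  filter_upwards [ae_le_of_mul_sub_le_intervalIntegral hf hinterval,
    ae_restrict_mem measurableSet_Ici] with t hlow ht
  simp only [f, indicator_of_mem ht] at hlow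
  exact ⟨hlow, (hbd t ht).2⟩

/-- Lemma 2(1): if `α⁽ⁿ⁾` are `(T,μ)`-signals, `ν_n ↗ ∞`, `α_n(t) = α⁽ⁿ⁾(ν_n t)`, and
`α⋆ ∈ L^∞([0,∞),[0,1])` is a weak-star limit point of `(α_n)` (i.e. the weak-star limit of the
subsequence `(α_{φ(k)})` for some strictly monotone `φ`), then `α⋆(t) ∈ [μ/T, 1]` for almost
every `t ≥ 0`. -/
theorem weakStar_limit_of_rescaled_pe_signals (T μ : ℝ) (hμ : 0 < μ) (hμT : μ ≤ T)
    (α : ℕ → ℝ → ℝ) (hα : ∀ n, IsPESignal T μ (α n))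
    (ν : ℕ → ℝ) (hν0 : ∀ n, 0 < ν n) (hνmono : StrictMono ν)
    (hνtop : Tendsto ν atTop atTop)
    (αstar : ℝ → ℝ) (hmeas : Measurable αstar)
    (hbd : ∀ t : ℝ, 0 ≤ t → αstar t ∈ Set.Icc (0:ℝ) 1)
    (φ : ℕ → ℕ) (hφ : StrictMono φ)
    (hlim : ∀ g : ℝ → ℝ, IntegrableOn g (Set.Ici (0:ℝ)) →
      Tendsto (fun k => ∫ s in Set.Ici (0:ℝ), α (φ k) (ν (φ k) * s) * g s) atTop
        (nhds (∫ s in Set.Ici (0:ℝ), αstar s * g s))) :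
    ∀ᵐ t ∂(volume.restrict (Set.Ici (0:ℝ))), αstar t ∈ Set.Icc (μ / T) 1 :=
  weakStar_limit_of_rescaled_pe_signals_general T μ hμ hμT α hα ν hν0 hνtop αstar hmeas hbd φ hφ
    hlim

end
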